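/- arXiv:1201.4892 — 2 statements merged into one kernel-verified Lean document; each statement's English description precedes it below -/
import Mathlib

section
/- Let B1 and B2 be proper unital C*-subalgebras of M_N, let B be a unital C*-subalgebra of B1, and assume Z(B1,B2;[B]) is nonempty. Then the map u ↦ uB2u* ∩ B1, from Z(B1,B2;[B]) to the set of unital C*-subalgebras of B1 equipped with the Hausdorff metric d_H, is continuous: for every u0 ∈ Z(B1,B2;[B]) and every ε > 0 there is δ > 0 such that every u ∈ Z(B1,B2;[B]) with ‖u − u0‖ < δ satisfies d_H(uB2u* ∩ B1, u0B2u0* ∩ B1) < ε. -/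
open scoped Matrix.Norms.L2Operator

set_option synthInstance.maxHeartbeats 1000000
set_option maxHeartbeats 1000000

noncomputable section

abbrev MatN (N : ℕ) := Matrix (Fin N) (Fin N) ℂ

/-- The perturbation `u S u*` of a set of matrices by a unitary. -/
def conjSet {N : ℕ} (u : MatN N) (S : Set (MatN N)) : Set (MatN N) :=
  (fun x => u * x * star u) '' S

/-- `Z(B1,B2;[B]) = { u ∈ U(M_N) : u B2 u* ∩ B1 ∼_{B1} B }`, where `∼_{B1}` is conjugacy by a
unitary of `B1`. -/
def Zset {N : ℕ} (B1 B2 B : StarSubalgebra ℂ (MatN N)) : Set (MatN N) :=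
  {u | u ∈ unitary (MatN N) ∧ ∃ v : MatN N, v ∈ unitary (MatN N) ∧ v ∈ B1 ∧
    conjSet v (B : Set (MatN N)) = conjSet u (B2 : Set (MatN N)) ∩ (B1 : Set (MatN N))}

/-- The Hausdorff distance between the closed unit balls of two sets of matrices. -/
def dH {N : ℕ} (C1 C2 : Set (MatN N)) : ℝ :=
  Metric.hausdorffDist (C1 ∩ Metric.closedBall (0 : MatN N) 1)
    (C2 ∩ Metric.closedBall (0 : MatN N) 1)

/-!
On `Z(B1,B2;[B])` every `u B2 u* ∩ B1` is unitarily conjugate to `B`, so these subspaces all have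
dimension `dim B`. As `u` varies over all of `M_N`, the subspaces `{x ∈ B1 | u* x u ∈ B2}` have a
closed graph, so by compactness of the unit ball their unit balls are upper semicontinuous in the
Hausdorff sense. For the lower bound, fix a continuous projection `p` onto the limit subspace `V₀`:
on a nearby subspace `V` it moves unit vectors only slightly, hence is injective on `V`, hence (by
equality of dimensions) onto `V₀`, and every point of the unit ball of `V₀` has a nearby preimage
in `V`.
-/

open Filter Topology Metric Module

theorem eventually_inter_subset_of_isClosed_graph {X Y : Type*} [TopologicalSpace X]
    [TopologicalSpace Y] {F : X → Set Y} (hF : IsClosed {p : X × Y | p.2 ∈ F p.1})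
    {K U : Set Y} (hK : IsCompact K) (hU : IsOpen U) {x₀ : X} (h₀ : F x₀ ∩ K ⊆ U) :
    ∀ᶠ x in 𝓝 x₀, F x ∩ K ⊆ U := by
  have hout : ∀ᶠ x in 𝓝 x₀, ∀ y ∈ K \ U, y ∉ F x :=
    (hK.diff hU).eventually_forall_of_forall_eventually fun y hy =>
      hF.isOpen_compl.mem_nhds fun hmem => hy.2 (h₀ ⟨hmem, hy.1⟩)
  filter_upwards [hout] with x hx y ⟨hyF, hyK⟩
  by_contra hyU
  exact hx y ⟨hyK, hyU⟩ hyF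

theorem Submodule.exists_mem_norm_sub_le_of_finrank_eq {𝕜 E : Type*} [NormedField 𝕜]
    [NormedAddCommGroup E] [NormedSpace 𝕜 E] [FiniteDimensional 𝕜 E] {V S : Submodule 𝕜 E}
    (p : E →ₗ[𝕜] V) (hrank : finrank 𝕜 S = finrank 𝕜 V)
    {δ : ℝ} (hδ₀ : 0 ≤ δ) (hδ₁ : δ < 1) (hS : ∀ v ∈ S, ‖v - p v‖ ≤ δ * ‖v‖)
    {y : E} (hy : y ∈ V) : ∃ v ∈ S, (1 - δ) * ‖v - y‖ ≤ δ * ‖y‖ := by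
  have hinj : Function.Injective (p ∘ₗ S.subtype) := by
    rw [← LinearMap.ker_eq_bot, LinearMap.ker_eq_bot']
    intro v hv
    have hle := hS v v.2
    simp only [LinearMap.comp_apply, Submodule.subtype_apply] at hv
    rw [hv, Submodule.coe_zero, sub_zero] at hle
    exact Subtype.ext (norm_le_zero_iff.mp (by nlinarith [norm_nonneg (v : E)]))
  obtain ⟨v, hv⟩ :=
    (LinearMap.injective_iff_surjective_of_finrank_eq_finrank hrank).mp hinj ⟨y, hy⟩
  have hpv : (p v : E) = y := congrArg Subtype.val hv
  refine ⟨v, v.2, ?_⟩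
  have hvy : ‖(v : E) - y‖ ≤ δ * ‖(v : E)‖ := hpv ▸ hS v v.2
  have hv_le : ‖(v : E)‖ ≤ ‖y‖ + ‖(v : E) - y‖ := norm_le_insert' _ _
  nlinarith

theorem Submodule.norm_apply_le_of_unit_norm {𝕜 E F : Type*} [RCLike 𝕜]
    [NormedAddCommGroup E] [NormedSpace 𝕜 E] [NormedAddCommGroup F] [NormedSpace 𝕜 F]
    (S : Submodule 𝕜 E) (f : E →L[𝕜] F) {C : ℝ} (hC : 0 ≤ C)
    (h : ∀ v ∈ S, ‖v‖ = 1 → ‖f v‖ ≤ C) {v : E} (hv : v ∈ S) : ‖f v‖ ≤ C * ‖v‖ := by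
  have hnorm : ‖f ∘L S.subtypeL‖ ≤ C :=
    ContinuousLinearMap.opNorm_le_of_unit_norm hC fun w hw => h w w.2 hw
  calc ‖f v‖ = ‖(f ∘L S.subtypeL) (⟨v, hv⟩ : S)‖ := rfl
    _ ≤ ‖f ∘L S.subtypeL‖ * ‖v‖ := ContinuousLinearMap.le_opNorm _ (⟨v, hv⟩ : S)
    _ ≤ C * ‖v‖ := by gcongr

theorem Submodule.infDist_inter_closedBall_le {𝕜 E : Type*} [RCLike 𝕜]
    [NormedAddCommGroup E] [NormedSpace 𝕜 E] {S : Submodule 𝕜 E} {v y : E} (hv : v ∈ S)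
    (hy : ‖y‖ ≤ 1) : infDist y ((S : Set E) ∩ closedBall 0 1) ≤ 2 * ‖v - y‖ := by
  rcases le_or_gt ‖v‖ 1 with hv1 | hv1
  · calc infDist y ((S : Set E) ∩ closedBall 0 1) ≤ dist y v :=
          infDist_le_dist_of_mem ⟨hv, mem_closedBall_zero_iff.mpr hv1⟩
      _ ≤ 2 * ‖v - y‖ := by rw [dist_comm, dist_eq_norm]; linarith [norm_nonneg (v - y)]
  · -- the radial retraction onto the unit ball moves `v` by `‖v‖ - 1 ≤ ‖v - y‖`
    set w : E := ((‖v‖⁻¹ : ℝ) : 𝕜) • v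
    have hv0 : 0 < ‖v‖ := one_pos.trans hv1
    have hw : ‖w‖ = 1 := by
      rw [norm_smul, RCLike.norm_ofReal, abs_inv, abs_norm, inv_mul_cancel₀ hv0.ne']
    have hvw : ‖v - w‖ = ‖v‖ - 1 := by
      have : v - w = ((1 - ‖v‖⁻¹ : ℝ) : 𝕜) • v := by
        simp only [w, RCLike.ofReal_sub, RCLike.ofReal_one, sub_smul, one_smul]
      rw [this, norm_smul, RCLike.norm_ofReal, abs_of_nonneg, sub_mul, one_mul,
        inv_mul_cancel₀ hv0.ne']
      exact sub_nonneg.mpr (inv_le_one_of_one_le₀ hv1.le)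
    calc infDist y ((S : Set E) ∩ closedBall 0 1) ≤ dist y w :=
          infDist_le_dist_of_mem ⟨S.smul_mem _ hv, mem_closedBall_zero_iff.mpr hw.le⟩
      _ = ‖(v - y) - (v - w)‖ := by rw [dist_eq_norm, ← norm_neg]; congr 1; abel
      _ ≤ ‖v - y‖ + ‖v - w‖ := norm_sub_le _ _
      _ ≤ 2 * ‖v - y‖ := by rw [hvw]; linarith [norm_sub_norm_le v y]

section FiniteDimensional

variable {𝕜 E X : Type*} [RCLike 𝕜] [NormedAddCommGroup E] [NormedSpace 𝕜 E]
  [FiniteDimensional 𝕜 E] [TopologicalSpace X] {S : X → Submodule 𝕜 E}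
  {x₀ : X} {l : Filter X}

theorem eventually_forall_infDist_inter_closedBall_lt
    (hS : IsClosed {p : X × E | p.2 ∈ S p.1}) (hl : l ≤ 𝓝 x₀)
    (hrank : ∀ᶠ x in l, finrank 𝕜 (S x) = finrank 𝕜 (S x₀)) {ε : ℝ} (hε : 0 < ε) :
    ∀ᶠ x in l, ∀ y ∈ (S x₀ : Set E) ∩ closedBall 0 1,
      infDist y ((S x : Set E) ∩ closedBall 0 1) < ε := by
  have := FiniteDimensional.proper_rclike 𝕜 E
  obtain ⟨p, hp⟩ := Submodule.ClosedComplemented.of_finiteDimensional (S x₀)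
  set R : E →L[𝕜] E := ContinuousLinearMap.id 𝕜 E - (S x₀).subtypeL ∘L p
  -- `δ ≤ 1 / 2` and `δ ≤ ε / 8` give `2 * δ / (1 - δ) < ε`
  set δ : ℝ := min (1 / 2) (ε / 8)
  have hδ : 0 < δ := lt_min (by norm_num) (by positivity)
  have hδ2 : δ ≤ 1 / 2 := min_le_left _ _
  have hδε : δ ≤ ε / 8 := min_le_right _ _
  have hsphere : ∀ᶠ x in l, ∀ v ∈ S x, ‖v‖ = 1 → ‖R v‖ ≤ δ := by
    have hU : IsOpen {v | ‖R v‖ < δ} := isOpen_lt (by fun_prop) continuous_const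
    have h₀ : (S x₀ : Set E) ∩ sphere 0 1 ⊆ {v | ‖R v‖ < δ} := fun v hv => by
      simpa [R, hp ⟨v, hv.1⟩] using hδ
    filter_upwards [hl (eventually_inter_subset_of_isClosed_graph (F := fun x => (S x : Set E))
      hS (isCompact_sphere 0 1) hU h₀)] with x hx v hv hv1
    exact (hx ⟨hv, mem_sphere_zero_iff_norm.mpr hv1⟩).le
  filter_upwards [hrank, hsphere] with x hx hxδ y ⟨hy, hy1⟩
  obtain ⟨v, hv, hvy⟩ := Submodule.exists_mem_norm_sub_le_of_finrank_eq (p : E →ₗ[𝕜] S x₀) hx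
    hδ.le (by linarith) (fun v hv => (S x).norm_apply_le_of_unit_norm R hδ.le hxδ hv) hy
  have hy1' : ‖y‖ ≤ 1 := mem_closedBall_zero_iff.mp hy1
  calc infDist y ((S x : Set E) ∩ closedBall 0 1) ≤ 2 * ‖v - y‖ :=
        Submodule.infDist_inter_closedBall_le hv hy1'
    _ < ε := by nlinarith [norm_nonneg (v - y), norm_nonneg y]

theorem tendsto_hausdorffDist_inter_closedBall
    (hS : IsClosed {p : X × E | p.2 ∈ S p.1}) (hl : l ≤ 𝓝 x₀)
    (hrank : ∀ᶠ x in l, finrank 𝕜 (S x) = finrank 𝕜 (S x₀)) :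
    Tendsto (fun x => hausdorffDist ((S x : Set E) ∩ closedBall 0 1)
      ((S x₀ : Set E) ∩ closedBall 0 1)) l (𝓝 0) := by
  have := FiniteDimensional.proper_rclike 𝕜 E
  refine Metric.tendsto_nhds.mpr fun ε hε => ?_
  set B₀ : Set E := (S x₀ : Set E) ∩ closedBall 0 1
  have hU : IsOpen {y | infDist y B₀ < ε / 2} :=
    isOpen_lt (continuous_infDist_pt _) continuous_const
  have h₀ : B₀ ⊆ {y | infDist y B₀ < ε / 2} := fun y hy => by
    simpa [infDist_zero_of_mem hy] using half_pos hε
  filter_upwards [hl (eventually_inter_subset_of_isClosed_graph (F := fun x => (S x : Set E))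
      hS (isCompact_closedBall 0 1) hU h₀),
    eventually_forall_infDist_inter_closedBall_lt hS hl hrank (half_pos hε)] with x hupper hlower
  rw [Real.dist_0_eq_abs, abs_of_nonneg hausdorffDist_nonneg]
  exact (hausdorffDist_le_of_infDist (half_pos hε).le (fun y hy => (hupper hy).le)
    fun y hy => (hlower y hy).le).trans_lt (half_lt_self hε)

end FiniteDimensional

/-- `{x ∈ B1 | u* x u ∈ B2}`, which is `u B2 u* ∩ B1` for unitary `u` (`coe_conjInter`); written
as a preimage so that its graph over all of `M_N` is closed. -/
def conjInter {N : ℕ} (B1 B2 : StarSubalgebra ℂ (MatN N)) (u : MatN N) :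
    Submodule ℂ (MatN N) :=
  (Subalgebra.toSubmodule B2.toSubalgebra).comap (LinearMap.mulLeftRight ℂ (star u, u)) ⊓
    Subalgebra.toSubmodule B1.toSubalgebra

section conjInter

variable {N : ℕ} (B1 B2 : StarSubalgebra ℂ (MatN N))

theorem coe_conjInter {u : MatN N} (hu : u ∈ unitary (MatN N)) :
    (conjInter B1 B2 u : Set (MatN N)) =
      conjSet u (B2 : Set (MatN N)) ∩ (B1 : Set (MatN N)) := by
  have : conjSet u (B2 : Set (MatN N)) =
      (Unitary.conjStarAlgAut ℂ (MatN N) ⟨u, hu⟩).toRingEquiv.toEquiv '' B2 := rfl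
  rw [this, Equiv.image_eq_preimage_symm]
  rfl

theorem isClosed_conjInter_graph :
    IsClosed {p : MatN N × MatN N | p.2 ∈ conjInter B1 B2 p.1} := by
  have hB1 : IsClosed (B1 : Set (MatN N)) :=
    (Subalgebra.toSubmodule B1.toSubalgebra).closed_of_finiteDimensional
  have hB2 : IsClosed (B2 : Set (MatN N)) :=
    (Subalgebra.toSubmodule B2.toSubalgebra).closed_of_finiteDimensional
  have hconj : Continuous fun p : MatN N × MatN N => star p.1 * p.2 * p.1 := by fun_prop
  exact (hB2.preimage hconj).inter (hB1.preimage continuous_snd)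

theorem finrank_conjInter_of_mem_Zset {B : StarSubalgebra ℂ (MatN N)} {u : MatN N}
    (hu : u ∈ Zset B1 B2 B) :
    finrank ℂ (conjInter B1 B2 u) = finrank ℂ (Subalgebra.toSubmodule B.toSubalgebra) := by
  obtain ⟨hu, v, hv, -, hvB⟩ := hu
  set e := (Unitary.conjStarAlgAut ℂ (MatN N) ⟨v, hv⟩).toAlgEquiv.toLinearEquiv
  have : conjInter B1 B2 u =
      (Subalgebra.toSubmodule B.toSubalgebra).map (e : MatN N →ₗ[ℂ] MatN N) := by
    apply SetLike.coe_injective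
    rw [coe_conjInter B1 B2 hu, ← hvB, Submodule.map_coe]
    rfl
  rw [this, LinearEquiv.finrank_map_eq]

end conjInter

theorem continuity_of_intersection_general (N : ℕ)
    (B1 B2 : StarSubalgebra ℂ (MatN N))
    (B : StarSubalgebra ℂ (MatN N)) :
    ∀ u0 ∈ Zset B1 B2 B, ∀ ε > (0 : ℝ), ∃ δ > (0 : ℝ), ∀ u ∈ Zset B1 B2 B,
      ‖u - u0‖ < δ →
        dH (conjSet u (B2 : Set (MatN N)) ∩ (B1 : Set (MatN N)))
           (conjSet u0 (B2 : Set (MatN N)) ∩ (B1 : Set (MatN N))) < ε := by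
  intro u0 hu0 ε hε
  have hrank : ∀ᶠ u in 𝓝[Zset B1 B2 B] u0,
      finrank ℂ (conjInter B1 B2 u) = finrank ℂ (conjInter B1 B2 u0) :=
    eventually_nhdsWithin_of_forall fun u hu =>
      (finrank_conjInter_of_mem_Zset B1 B2 hu).trans
        (finrank_conjInter_of_mem_Zset B1 B2 hu0).symm
  have hlim := (tendsto_hausdorffDist_inter_closedBall (isClosed_conjInter_graph B1 B2)
    nhdsWithin_le_nhds hrank).eventually_lt_const hε
  obtain ⟨δ, hδ, hball⟩ := Metric.eventually_nhds_iff.mp (eventually_nhdsWithin_iff.mp hlim)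
  refine ⟨δ, hδ, fun u hu hu_near => ?_⟩
  have hdist := hball (by rwa [dist_eq_norm]) hu
  rwa [dH, ← coe_conjInter B1 B2 hu.1, ← coe_conjInter B1 B2 hu0.1]

/-- The map `u ↦ u B2 u* ∩ B1` is continuous from `Z(B1,B2;[B])` to the unital
C*-subalgebras of `B1` with the Hausdorff metric. -/
theorem continuity_of_intersection (N : ℕ) (hN : 0 < N)
    (B1 B2 : StarSubalgebra ℂ (MatN N)) (hB1 : B1 ≠ ⊤) (hB2 : B2 ≠ ⊤)
    (B : StarSubalgebra ℂ (MatN N)) (hB : B ≤ B1)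
    (hZ : (Zset B1 B2 B).Nonempty) :
    ∀ u0 ∈ Zset B1 B2 B, ∀ ε > (0 : ℝ), ∃ δ > (0 : ℝ), ∀ u ∈ Zset B1 B2 B,
      ‖u - u0‖ < δ →
        dH (conjSet u (B2 : Set (MatN N)) ∩ (B1 : Set (MatN N)))
           (conjSet u0 (B2 : Set (MatN N)) ∩ (B1 : Set (MatN N))) < ε :=
  continuity_of_intersection_general N B1 B2 B
end
end

section
/- Let B1 be a unital C*-subalgebra of M_N and B a unital C*-subalgebra of B1. Let Stab(B1,B) = { u ∈ U(B1) : uBu* = B } and let G be the subgroup of Stab(B1,B) generated by the unitary group of B and the unitary group of B1 ∩ B'. Then G is a normal subgroup of Stab(B1,B) of finite index; moreover, if B is *-isomorphic to ⊕_{i=1}^{I} ⊕_{j=1}^{J_i} M_{n_i} with n_1 < n_2 < ⋯ < n_I, then the index of G in Stab(B1,B) is at most J_1!·J_2!⋯J_I!. -/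
/-!
Conjugation by `u ∈ Stab(B1,B)` is a ⋆-automorphism of `B ≅ ⨁ᵢ ⨁ⱼ M_{nᵢ}`. Such an automorphism
permutes the minimal central projections of `B` and preserves the size of the corresponding
blocks; since the `nᵢ` are distinct it only permutes the `Jᵢ` blocks of each size, so `u`
determines an element of `∏ᵢ S_{Jᵢ}`. If `t, u ∈ Stab(B1,B)` determine the same permutation, then
`t⋆u` fixes every minimal central projection, hence acts on each block `M_{nᵢ}` by a
⋆-automorphism, which is inner by a unitary. Collecting these unitaries gives `v ∈ U(B)` with
`t⋆u = v (v⋆t⋆u)` and `v⋆t⋆u ∈ U(B1 ∩ B')`. One representative per permutation is a set of at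
most `J₁!⋯J_I!` coset representatives.
-/

set_option synthInstance.maxHeartbeats 1000000
set_option maxHeartbeats 1000000

noncomputable section

def Stab {N : ℕ} (B1 B : StarSubalgebra ℂ (MatN N)) : Set (MatN N) :=
  {u | u ∈ unitary (MatN N) ∧ u ∈ B1 ∧
    (fun x => u * x * star u) '' (B : Set (MatN N)) = (B : Set (MatN N))}

/-- The subgroup of `Stab(B1,B)` generated by `U(B)` and `U(B1 ∩ B')`; since these two
unitary groups commute elementwise, it consists exactly of the products `v * w` with
`v ∈ U(B)` and `w ∈ U(B1 ∩ B')`. -/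
def Gsub {N : ℕ} (B1 B : StarSubalgebra ℂ (MatN N)) : Set (MatN N) :=
  {g | ∃ v w : MatN N, v ∈ unitary (MatN N) ∧ v ∈ B ∧
    w ∈ unitary (MatN N) ∧ w ∈ B1 ∧ (∀ b ∈ B, w * b = b * w) ∧ g = v * w}

open Unitary

theorem Equiv.image_eq_self_iff {α : Type*} (e : α ≃ α) (s : Set α) :
    e '' s = s ↔ ∀ x ∈ s, e x ∈ s ∧ e.symm x ∈ s := by
  rw [Set.Subset.antisymm_iff, Set.image_subset_iff, e.image_eq_preimage_symm]
  exact ⟨fun h x hx => ⟨h.1 hx, h.2 hx⟩, fun h => ⟨fun x hx => (h x hx).1, fun x hx => (h x hx).2⟩⟩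

theorem exists_finset_transversal {α γ : Type*} [Fintype γ] (S : Set α) (P : α → γ → Prop)
    (hP : ∀ u ∈ S, ∃ c, P u c) :
    ∃ T : Finset α, ↑T ⊆ S ∧ T.card ≤ Fintype.card γ ∧ ∀ u ∈ S, ∃ t ∈ T, ∃ c, P t c ∧ P u c := by
  classical
  choose r hrS hrP using fun c : {c : γ // ∃ t ∈ S, P t c} => c.2
  refine ⟨Finset.univ.image r, ?_, Finset.card_image_le.trans (Fintype.card_subtype_le _), ?_⟩
  · intro t ht
    obtain ⟨c, -, rfl⟩ := Finset.mem_image.mp ht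
    exact hrS c
  · intro u hu
    obtain ⟨c, hc⟩ := hP u hu
    exact ⟨r ⟨c, u, hu, hc⟩, Finset.mem_image_of_mem _ (Finset.mem_univ _), c, hrP _, hc⟩

theorem commute_star_mul_of_conj_eq {R : Type*} [Monoid R] [StarMul R] {t u c : R}
    (ht : t ∈ unitary R) (hu : u ∈ unitary R) (h : t * c * star t = u * c * star u) :
    Commute (star t * u) c := calc
  star t * u * c = star t * (u * c * star u) * u := by
    simp only [mul_assoc, star_mul_self_of_mem hu, mul_one]
  _ = star t * (t * c * star t) * u := by rw [h]
  _ = c * (star t * u) := by simp only [← mul_assoc, star_mul_self_of_mem ht, one_mul]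

def StarAlgEquiv.piCurry (R : Type*) {ι : Type*} {κ : ι → Type*} (A : ∀ i, κ i → Type*)
    [∀ i j, Semiring (A i j)] [∀ i j, SMul R (A i j)] [∀ i j, Star (A i j)] :
    (∀ k : Sigma κ, A k.1 k.2) ≃⋆ₐ[R] ∀ i j, A i j where
  __ := Equiv.piCurry A
  map_add' _ _ := rfl
  map_mul' _ _ := rfl
  map_smul' _ _ := rfl
  map_star' _ := rfl

theorem Matrix.eq_zero_or_eq_one_of_commute_of_isIdempotentElem {K n : Type*} [Field K]
    [Fintype n] [DecidableEq n] {M : Matrix n n K} (hM : ∀ N, Commute M N)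
    (hM' : IsIdempotentElem M) : M = 0 ∨ M = 1 := by
  rcases isEmpty_or_nonempty n with hn | hn
  · exact Or.inl (Subsingleton.elim _ _)
  obtain ⟨c, rfl⟩ := Matrix.mem_range_scalar_of_commute_single fun i j _ => (hM _).symm
  have hc : IsIdempotentElem c := (scalar n).injective (by rw [map_mul]; exact hM')
  rcases IsIdempotentElem.iff_eq_zero_or_one.mp hc with rfl | rfl <;> simp

theorem Matrix.exists_unitary_eq_conjStarAlgAut {𝕜 : Type*} [RCLike 𝕜] {n : Type*} [Fintype n]
    [DecidableEq n] (f : Matrix n n 𝕜 ≃⋆ₐ[𝕜] Matrix n n 𝕜) :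
    ∃ U : unitary (Matrix n n 𝕜), f = conjStarAlgAut 𝕜 _ U := by
  let T := Matrix.toEuclideanCLM (n := n) (𝕜 := 𝕜)
  let g := (T.symm.trans f).trans T
  obtain ⟨V, hV⟩ := g.eq_linearIsometryEquivConjStarAlgEquiv
    (g.toAlgEquiv.toLinearMap.continuous_of_finiteDimensional)
  rw [← conjStarAlgAut_symm_unitaryLinearIsometryEquiv] at hV
  set u := linearIsometryEquiv.symm V
  refine ⟨⟨T.symm u, Unitary.map_mem T.symm u.2⟩, ?_⟩
  ext1 a
  have := congr(T.symm ($hV (T a)))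
  rw [conjStarAlgAut_apply, map_mul, map_mul, map_star] at this
  simpa [g] using this

structure IsMinimalCentralIdempotent {R : Type*} [Ring R] (z : R) : Prop where
  commute : ∀ y, Commute z y
  isIdempotentElem : IsIdempotentElem z
  ne_zero : z ≠ 0
  mul_eq_zero_or_eq : ∀ w, (∀ y, Commute w y) → IsIdempotentElem w → z * w = 0 ∨ z * w = z

theorem IsMinimalCentralIdempotent.map {R S : Type*} [Ring R] [Ring S] (ψ : R ≃+* S) {z : R}
    (hz : IsMinimalCentralIdempotent z) : IsMinimalCentralIdempotent (ψ z) where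
  commute y := by simpa using (hz.commute (ψ.symm y)).map ψ
  isIdempotentElem := hz.isIdempotentElem.map ψ
  ne_zero := by simpa using hz.ne_zero
  mul_eq_zero_or_eq w hw hw' := by
    rw [← ψ.apply_symm_apply w, ← map_mul, map_eq_zero_iff _ ψ.injective, ψ.injective.eq_iff]
    exact hz.mul_eq_zero_or_eq _ (fun y => by simpa using (hw (ψ y)).map ψ.symm) (hw'.map ψ.symm)

section PiSingle

variable {κ : Type*} [DecidableEq κ] {R : κ → Type*} [∀ k, Semiring (R k)]

theorem Pi.commute_single_one (k : κ) (y : ∀ k, R k) : Commute (Pi.single k 1) y := by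
  ext1 s
  rcases eq_or_ne s k with rfl | hs <;> simp [*]

theorem Pi.isIdempotentElem_single_one (k : κ) : IsIdempotentElem (Pi.single k 1 : ∀ k, R k) := by
  simp [IsIdempotentElem, ← Pi.single_mul]

theorem map_single_eq_single_apply {F : Type*} [FunLike F (∀ k, R k) (∀ k, R k)]
    [MulHomClass F _ _] (ψ : F) {k s : κ} (h : ψ (Pi.single k 1) = Pi.single s 1) (m : R k) :
    ψ (Pi.single k m) = Pi.single s (ψ (Pi.single k m) s) := calc
  ψ (Pi.single k m) = ψ (Pi.single k m * Pi.single k 1) := by rw [← Pi.single_mul, mul_one]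
  _ = ψ (Pi.single k m) * Pi.single s 1 := by rw [map_mul, h]
  _ = Pi.single s (ψ (Pi.single k m) s) := by rw [← Pi.single_mul_right, mul_one]

theorem injective_map_single_apply {F : Type*} [EquivLike F (∀ k, R k) (∀ k, R k)]
    [MulEquivClass F _ _] (ψ : F) {k s : κ} (h : ψ (Pi.single k 1) = Pi.single s 1) :
    Function.Injective fun m : R k => ψ (Pi.single k m) s := by
  intro a b hab
  refine Pi.single_injective k (EquivLike.injective ψ ?_)
  rw [map_single_eq_single_apply ψ h a, map_single_eq_single_apply ψ h b]
  exact congrArg _ hab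

end PiSingle

abbrev MultiMatrix (K : Type*) {κ : Type*} (d : κ → ℕ) : Type _ :=
  ∀ k, Matrix (Fin (d k)) (Fin (d k)) K

section MultiMatrix

variable {K : Type*} [Field K] {κ : Type*} [DecidableEq κ] {d : κ → ℕ}

theorem MultiMatrix.eq_zero_or_eq_one_apply {z : MultiMatrix K d} (hz : ∀ y, Commute z y)
    (hz' : IsIdempotentElem z) (k : κ) : z k = 0 ∨ z k = 1 := by
  refine Matrix.eq_zero_or_eq_one_of_commute_of_isIdempotentElem (fun N => ?_) (congr_fun hz' k)
  show z k * N = N * z k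
  simpa using congr_fun (hz (Pi.single k N)).eq k

theorem MultiMatrix.isMinimalCentralIdempotent_single_one (hd : ∀ k, 0 < d k) (k : κ) :
    IsMinimalCentralIdempotent (Pi.single k 1 : MultiMatrix K d) where
  commute := Pi.commute_single_one k
  isIdempotentElem := Pi.isIdempotentElem_single_one k
  ne_zero := by
    have : NeZero (d k) := ⟨(hd k).ne'⟩
    simp
  mul_eq_zero_or_eq w hw hw' := by
    rw [← Pi.single_mul_left, one_mul]
    rcases eq_zero_or_eq_one_apply hw hw' k with h | h <;> simp [h]

theorem IsMinimalCentralIdempotent.exists_eq_single_one {z : MultiMatrix K d}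
    (hz : IsMinimalCentralIdempotent z) : ∃ k, z = Pi.single k 1 := by
  obtain ⟨k, hk⟩ : ∃ k, z k ≠ 0 := by
    by_contra! h
    exact hz.ne_zero (funext h)
  have hk1 := (MultiMatrix.eq_zero_or_eq_one_apply hz.commute hz.isIdempotentElem k).resolve_left hk
  refine ⟨k, ?_⟩
  rcases hz.mul_eq_zero_or_eq _ (Pi.commute_single_one k) (Pi.isIdempotentElem_single_one k)
    with h | h
  · exact absurd (by simpa using congr_fun h k) hk
  · rw [← h, ← Pi.single_mul_right, hk1, one_mul]

theorem MultiMatrix.le_of_map_single_one_eq (ψ : MultiMatrix K d ≃ₐ[K] MultiMatrix K d)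
    {k s : κ} (h : ψ (Pi.single k 1) = Pi.single s 1) : d k ≤ d s := by
  let F := LinearMap.proj s ∘ₗ ψ.toLinearMap ∘ₗ LinearMap.single K _ k
  have := LinearMap.finrank_le_finrank_of_injective (f := F) (injective_map_single_apply ψ h)
  simp only [Module.finrank_matrix, Fintype.card_fin, Module.finrank_self, mul_one] at this
  exact Nat.mul_self_le_mul_self_iff.mp this

theorem MultiMatrix.exists_perm_map_single_one [Fintype κ] (hd : ∀ k, 0 < d k)
    (ψ : MultiMatrix K d ≃ₐ[K] MultiMatrix K d) :
    ∃ τ : Equiv.Perm κ, ∀ k, d (τ k) = d k ∧ ψ (Pi.single k 1) = Pi.single (τ k) 1 := by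
  choose τ hτ using fun k =>
    ((isMinimalCentralIdempotent_single_one hd k).map ψ.toRingEquiv).exists_eq_single_one
  have hτ_inj : Function.Injective τ := by
    intro k k' hkk'
    have h : (Pi.single k 1 : MultiMatrix K d) = Pi.single k' 1 :=
      ψ.injective ((hτ k).trans (hkk' ▸ (hτ k').symm))
    by_contra hne
    have h1 : (1 : Matrix (Fin (d k)) (Fin (d k)) K) = 0 := by
      simpa [Pi.single_eq_of_ne hne] using congr_fun h k
    exact (isMinimalCentralIdempotent_single_one hd k).ne_zero (by rw [h1, Pi.single_zero])
  let σ := Equiv.ofBijective τ hτ_inj.bijective_of_finite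
  have hle k : d k ≤ d (σ k) := le_of_map_single_one_eq ψ (hτ k)
  have hsum : ∑ k, d k = ∑ k, d (σ k) := (σ.sum_comp d).symm
  exact ⟨σ, fun k => ⟨((Finset.sum_eq_sum_iff_of_le fun k _ => hle k).mp hsum k
    (Finset.mem_univ k)).symm, hτ k⟩⟩

end MultiMatrix

section MultiMatrixStar

variable {𝕜 : Type*} [RCLike 𝕜] {κ : Type*} [DecidableEq κ] {d : κ → ℕ}

def MultiMatrix.blockStarAlgHom (ψ : MultiMatrix 𝕜 d ≃⋆ₐ[𝕜] MultiMatrix 𝕜 d) {k : κ}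
    (h : ψ (Pi.single k 1) = Pi.single k 1) :
    Matrix (Fin (d k)) (Fin (d k)) 𝕜 →⋆ₐ[𝕜] Matrix (Fin (d k)) (Fin (d k)) 𝕜 where
  toFun m := ψ (Pi.single k m) k
  map_one' := by simp [h]
  map_mul' a b := by simp [Pi.single_mul]
  map_zero' := by simp
  map_add' a b := by simp [Pi.single_add]
  commutes' c := by
    simp only [Algebra.algebraMap_eq_smul_one, Pi.single_smul, map_smul, h]
    simp
  map_star' m := by
    simp only [Pi.single_star (f := fun k => Matrix (Fin (d k)) (Fin (d k)) 𝕜) k m, map_star,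
      Pi.star_apply]

theorem MultiMatrix.blockStarAlgHom_bijective (ψ : MultiMatrix 𝕜 d ≃⋆ₐ[𝕜] MultiMatrix 𝕜 d)
    {k : κ} (h : ψ (Pi.single k 1) = Pi.single k 1) :
    Function.Bijective (blockStarAlgHom ψ h) := by
  have hinj : Function.Injective (blockStarAlgHom ψ h).toAlgHom.toLinearMap :=
    injective_map_single_apply ψ h
  exact ⟨hinj, LinearMap.injective_iff_surjective.mp hinj⟩

theorem MultiMatrix.exists_unitary_eq_conjStarAlgAut_of_map_single_one
    (ψ : MultiMatrix 𝕜 d ≃⋆ₐ[𝕜] MultiMatrix 𝕜 d) (h : ∀ k, ψ (Pi.single k 1) = Pi.single k 1) :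
    ∃ U : unitary (MultiMatrix 𝕜 d), ψ = conjStarAlgAut 𝕜 _ U := by
  choose V hV using fun k =>
    Matrix.exists_unitary_eq_conjStarAlgAut (.ofBijective _ (blockStarAlgHom_bijective ψ (h k)))
  refine ⟨⟨fun k => V k, Unitary.mem_iff.mpr ⟨funext fun k => by simp, funext fun k => by simp⟩⟩,
    ?_⟩
  ext1 x
  funext k
  have hblock : ψ x k = ψ (Pi.single k (x k)) k := calc
    ψ x k = (ψ x * Pi.single k 1 : MultiMatrix 𝕜 d) k := by simp
    _ = ψ (Pi.single k (x k)) k := by rw [← h, ← map_mul, ← Pi.single_mul_right, mul_one]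
  rw [hblock]
  exact congr($(hV k) (x k))

end MultiMatrixStar

section Stab

variable {N : ℕ} {B1 B : StarSubalgebra ℂ (MatN N)} {u v w g b : MatN N}

theorem mem_stab_iff : u ∈ Stab B1 B ↔ u ∈ unitary (MatN N) ∧ u ∈ B1 ∧
    ∀ b ∈ B, u * b * star u ∈ B ∧ star u * b * u ∈ B :=
  and_congr_right fun hu => and_congr_right fun _ =>
    (conjStarAlgAut ℂ _ ⟨u, hu⟩).toEquiv.image_eq_self_iff B

theorem conj_mem_of_mem_stab (hu : u ∈ Stab B1 B) (hb : b ∈ B) : u * b * star u ∈ B :=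
  ((mem_stab_iff.mp hu).2.2 b hb).1

theorem star_conj_mem_of_mem_stab (hu : u ∈ Stab B1 B) (hb : b ∈ B) : star u * b * u ∈ B :=
  ((mem_stab_iff.mp hu).2.2 b hb).2

theorem star_mem_stab (hu : u ∈ Stab B1 B) : star u ∈ Stab B1 B :=
  mem_stab_iff.mpr ⟨Unitary.star_mem hu.1, star_mem hu.2.1, fun b hb => by
    simpa only [star_star, and_comm] using (mem_stab_iff.mp hu).2.2 b hb⟩

theorem mul_mem_stab (hu : u ∈ Stab B1 B) (hv : v ∈ Stab B1 B) : u * v ∈ Stab B1 B :=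
  mem_stab_iff.mpr ⟨mul_mem hu.1 hv.1, mul_mem hu.2.1 hv.2.1, fun b hb =>
    ⟨by simpa only [star_mul, mul_assoc] using conj_mem_of_mem_stab hu (conj_mem_of_mem_stab hv hb),
      by simpa only [star_mul, mul_assoc] using
        star_conj_mem_of_mem_stab hv (star_conj_mem_of_mem_stab hu hb)⟩⟩

theorem mem_stab_of_mem (hB : B ≤ B1) (hv : v ∈ unitary (MatN N)) (hvB : v ∈ B) :
    v ∈ Stab B1 B :=
  mem_stab_iff.mpr ⟨hv, hB hvB, fun _ hb =>
    ⟨mul_mem (mul_mem hvB hb) (star_mem hvB), mul_mem (mul_mem (star_mem hvB) hb) hvB⟩⟩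

theorem mem_stab_of_commute (hw : w ∈ unitary (MatN N)) (hw1 : w ∈ B1)
    (hc : ∀ b ∈ B, w * b = b * w) : w ∈ Stab B1 B :=
  mem_stab_iff.mpr ⟨hw, hw1, fun b hb =>
    ⟨by rwa [hc b hb, mul_assoc, mul_star_self_of_mem hw, mul_one],
      by rwa [mul_assoc, ← hc b hb, ← mul_assoc, star_mul_self_of_mem hw, one_mul]⟩⟩

theorem gsub_subset_stab (hB : B ≤ B1) : Gsub B1 B ⊆ Stab B1 B := by
  rintro _ ⟨v, w, hv, hvB, hw, hw1, hc, rfl⟩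
  exact mul_mem_stab (mem_stab_of_mem hB hv hvB) (mem_stab_of_commute hw hw1 hc)

theorem conj_mem_gsub (hu : u ∈ Stab B1 B) (hg : g ∈ Gsub B1 B) : u * g * star u ∈ Gsub B1 B := by
  obtain ⟨v, w, hv, hvB, hw, hw1, hc, rfl⟩ := hg
  let conj := conjStarAlgAut ℂ (MatN N) ⟨u, hu.1⟩
  have hunit {x : MatN N} (hx : x ∈ unitary (MatN N)) : conj x ∈ unitary (MatN N) :=
    mul_mem (mul_mem hu.1 hx) (Unitary.star_mem hu.1)
  refine ⟨conj v, conj w, hunit hv, conj_mem_of_mem_stab hu hvB, hunit hw,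
    mul_mem (mul_mem hu.2.1 hw1) (star_mem hu.2.1), fun b hb => ?_, map_mul conj v w⟩
  have hcomm : Commute w (conj.symm b) := hc _ (star_conj_mem_of_mem_stab hu hb)
  simpa only [conj.apply_symm_apply] using (hcomm.map conj).eq

end Stab

section BlockDecomposition

variable {N : ℕ} {B1 B : StarSubalgebra ℂ (MatN N)} {u g : MatN N}

def stabConj (hu : u ∈ Stab B1 B) : ↥B ≃⋆ₐ[ℂ] ↥B :=
  let conj := conjStarAlgAut ℂ (MatN N) ⟨u, hu.1⟩
  .ofBijective ((conj.toStarAlgHom.comp B.subtype).codRestrict B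
      fun b => conj_mem_of_mem_stab hu b.2)
    ⟨fun _ _ h => Subtype.ext (conj.injective congr(($h : MatN N))),
      fun b => ⟨⟨star u * b * u, star_conj_mem_of_mem_stab hu b.2⟩,
        Subtype.ext (conj.apply_symm_apply b)⟩⟩

def stabAut {A : Type*} [Semiring A] [Algebra ℂ A] [Star A] (e : ↥B ≃⋆ₐ[ℂ] A)
    (hu : u ∈ Stab B1 B) : A ≃⋆ₐ[ℂ] A :=
  e.symm.trans ((stabConj hu).trans e)

theorem coe_symm_stabAut_apply {A : Type*} [Semiring A] [Algebra ℂ A] [Star A]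
    (e : ↥B ≃⋆ₐ[ℂ] A) (hu : u ∈ Stab B1 B) (x : A) :
    (e.symm (stabAut e hu x) : MatN N) = u * e.symm x * star u := by
  simp only [stabAut, StarAlgEquiv.trans_apply, StarAlgEquiv.symm_apply_apply]
  rfl

variable {κ : Type*} [DecidableEq κ] {d : κ → ℕ}

theorem exists_perm_conj_single_one [Fintype κ] (hd : ∀ k, 0 < d k)
    (e : ↥B ≃⋆ₐ[ℂ] MultiMatrix ℂ d) (hu : u ∈ Stab B1 B) :
    ∃ τ : Equiv.Perm κ, ∀ k, d (τ k) = d k ∧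
      u * e.symm (Pi.single k 1) * star u = e.symm (Pi.single (τ k) 1) := by
  obtain ⟨τ, hτ⟩ := MultiMatrix.exists_perm_map_single_one hd (stabAut e hu).toAlgEquiv
  refine ⟨τ, fun k => ⟨(hτ k).1, ?_⟩⟩
  rw [← coe_symm_stabAut_apply e hu]
  exact congr((e.symm $((hτ k).2) : MatN N))

theorem mem_gsub_of_commute_single_one (hB : B ≤ B1) (e : ↥B ≃⋆ₐ[ℂ] MultiMatrix ℂ d)
    (hg : g ∈ Stab B1 B) (hc : ∀ k, Commute g (e.symm (Pi.single k 1))) : g ∈ Gsub B1 B := by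
  have hfix k : stabAut e hg (Pi.single k 1) = Pi.single k 1 := by
    refine EquivLike.injective e.symm (Subtype.ext ?_)
    rw [coe_symm_stabAut_apply, (hc k).eq, mul_assoc, mul_star_self_of_mem hg.1, mul_one]
  obtain ⟨V, hV⟩ := MultiMatrix.exists_unitary_eq_conjStarAlgAut_of_map_single_one _ hfix
  set W : MatN N := ↑(e.symm V)
  have hW : W ∈ unitary (MatN N) := Unitary.map_mem B.subtype (Unitary.map_mem e.symm V.2)
  have hconj b (hb : b ∈ B) : g * b * star g = W * b * star W := by
    have := congr((e.symm $(congr($hV (e ⟨b, hb⟩))) : MatN N))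
    simpa [coe_symm_stabAut_apply, W, map_star] using this
  refine ⟨W, star W * g, hW, (e.symm V).2, mul_mem (Unitary.star_mem hW) hg.1,
    mul_mem (star_mem (hB (e.symm V).2)) hg.2.1, fun b hb => ?_, by
      rw [← mul_assoc, mul_star_self_of_mem hW, one_mul]⟩
  calc star W * g * b = star W * (g * b * star g) * g := by
        simp only [mul_assoc, star_mul_self_of_mem hg.1, mul_one]
    _ = star W * (W * b * star W) * g := by rw [hconj b hb]
    _ = b * (star W * g) := by simp only [← mul_assoc, star_mul_self_of_mem hW, one_mul]

end BlockDecomposition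

theorem stab_normal_finite_index_general (N : ℕ)
    (B1 B : StarSubalgebra ℂ (MatN N)) (hB : B ≤ B1)
    (I : ℕ) (n J : Fin I → ℕ) (hn : ∀ i, 0 < n i)
    (hmono : StrictMono n)
    (iso : Nonempty (↥B ≃⋆ₐ[ℂ]
      ((i : Fin I) → Fin (J i) → Matrix (Fin (n i)) (Fin (n i)) ℂ))) :
    Gsub B1 B ⊆ Stab B1 B ∧
    (∀ u ∈ Stab B1 B, ∀ g ∈ Gsub B1 B, u * g * star u ∈ Gsub B1 B) ∧
    ∃ T : Finset (MatN N), (T : Set (MatN N)) ⊆ Stab B1 B ∧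
      T.card ≤ ∏ i, Nat.factorial (J i) ∧
      ∀ u ∈ Stab B1 B, ∃ t ∈ T, ∃ g ∈ Gsub B1 B, u = t * g := by
  refine ⟨gsub_subset_stab hB, fun u hu g hg => conj_mem_gsub hu hg, ?_⟩
  let κ := Σ i, Fin (J i)
  let e : ↥B ≃⋆ₐ[ℂ] MultiMatrix ℂ fun k : κ => n k.1 := iso.some.trans
    (StarAlgEquiv.piCurry ℂ fun i (_ : Fin (J i)) => Matrix (Fin (n i)) (Fin (n i)) ℂ).symm
  let c (k : κ) : MatN N := e.symm (Pi.single k 1)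
  obtain ⟨T, hTS, hTcard, hT⟩ := exists_finset_transversal (Stab B1 B)
    (fun u (τ : {τ : Equiv.Perm κ // Sigma.fst ∘ τ = Sigma.fst}) =>
      ∀ k, u * c k * star u = c (τ.1 k)) fun u hu => by
    obtain ⟨τ, hτ⟩ := exists_perm_conj_single_one (fun k : κ => hn k.1) e hu
    exact ⟨⟨τ, funext fun k => hmono.injective (hτ k).1⟩, fun k => (hτ k).2⟩
  refine ⟨T, hTS, ?_, fun u hu => ?_⟩
  · rw [DomMulAct.stabilizer_card] at hTcard
    convert hTcard using 3 with i
    rw [Fintype.card_congr (Equiv.sigmaSubtype i), Fintype.card_fin]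
  · obtain ⟨t, htT, τ, ht, hu'⟩ := hT u hu
    have htS := hTS htT
    refine ⟨t, htT, star t * u, mem_gsub_of_commute_single_one hB e
      (mul_mem_stab (star_mem_stab htS) hu)
      fun k => commute_star_mul_of_conj_eq htS.1 hu.1 ((ht k).trans (hu' k).symm), ?_⟩
    rw [← mul_assoc, mul_star_self_of_mem htS.1, one_mul]

/-- `G` is a normal subgroup of `Stab(B1,B)` of finite index; if
`B ≅ ⊕_{i=1}^I ⊕_{j=1}^{J_i} M_{n_i}` with `n_1 < ⋯ < n_I`, the index is at most
`J_1! ⋯ J_I!`. -/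
theorem stab_normal_finite_index (N : ℕ) (hN : 0 < N)
    (B1 B : StarSubalgebra ℂ (MatN N)) (hB : B ≤ B1)
    (I : ℕ) (hI : 0 < I) (n J : Fin I → ℕ) (hn : ∀ i, 0 < n i) (hJ : ∀ i, 0 < J i)
    (hmono : StrictMono n)
    (iso : Nonempty (↥B ≃⋆ₐ[ℂ]
      ((i : Fin I) → Fin (J i) → Matrix (Fin (n i)) (Fin (n i)) ℂ))) :
    Gsub B1 B ⊆ Stab B1 B ∧
    (∀ u ∈ Stab B1 B, ∀ g ∈ Gsub B1 B, u * g * star u ∈ Gsub B1 B) ∧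
    ∃ T : Finset (MatN N), (T : Set (MatN N)) ⊆ Stab B1 B ∧
      T.card ≤ ∏ i, Nat.factorial (J i) ∧
      ∀ u ∈ Stab B1 B, ∃ t ∈ T, ∃ g ∈ Gsub B1 B, u = t * g :=
  stab_normal_finite_index_general N B1 B hB I n J hn hmono iso
end
end
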